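/- McDiarmid's inequality: let X_1,…,X_n be independent random variables and f a function satisfying the bounded differences property with constants c_1,…,c_n (changing the i-th coordinate changes f by at most c_i). Then for all t > 0, P(|f(X_1,…,X_n) − E[f(X_1,…,X_n)]| ≥ t) ≤ 2 exp(−2t² / ∑_{i=1}^n c_i²). -/

import Mathlib

/-!
By independence we may work on the product space. Write `f(X) - 𝔼 f(X)` as
`(f(X) - 𝔼[f(X) | X₁, …, Xₙ]) + (𝔼[f(X) | X₁, …, Xₙ] - 𝔼 f(X))`, integrating out `X₀`.
For fixed `X₁, …, Xₙ` the first summand is centred and ranges over an interval of length `c₀`,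
so by Hoeffding's lemma it is sub-Gaussian with parameter `c₀² / 4`; the second is a function of
the remaining coordinates with bounded differences, hence sub-Gaussian by induction. The
parameters add up under this kind of conditioning, so `f(X) - 𝔼 f(X)` is sub-Gaussian with
parameter `∑ cᵢ² / 4`, and the Chernoff bound on both tails gives `2 exp (-2 t² / ∑ cᵢ²)`.
-/

open MeasureTheory ProbabilityTheory Real
open scoped NNReal

def BoundedDifferences {ι : Type*} {𝒳 : ι → Type*} (f : (∀ i, 𝒳 i) → ℝ) (c : ι → ℝ) : Prop :=
  ∀ (x x' : ∀ i, 𝒳 i) (i : ι), (∀ j, j ≠ i → x j = x' j) → |f x - f x'| ≤ c i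

namespace BoundedDifferences

variable {ι : Type*} {𝒳 : ι → Type*} {f : (∀ i, 𝒳 i) → ℝ} {c : ι → ℝ}

theorem abs_sub_le_sum_of_forall_notMem [DecidableEq ι] (hf : BoundedDifferences f c)
    (s : Finset ι) {x x' : ∀ i, 𝒳 i} (hxx' : ∀ j ∉ s, x j = x' j) :
    |f x - f x'| ≤ ∑ i ∈ s, c i := by
  induction s using Finset.induction_on generalizing x with
  | empty => simp [funext fun j => hxx' j (Finset.notMem_empty j)]
  | insert i s hi ih =>
    let y := Function.update x i (x' i)
    have hxy : |f x - f y| ≤ c i :=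
      hf x y i fun j hj => (Function.update_of_ne hj _ _).symm
    have hyx' : |f y - f x'| ≤ ∑ k ∈ s, c k := by
      refine ih fun j hj => ?_
      by_cases hji : j = i
      · subst hji; exact Function.update_self ..
      · rw [show y j = x j from Function.update_of_ne hji _ _]
        exact hxx' j (by simp [hji, hj])
    calc |f x - f x'| ≤ |f x - f y| + |f y - f x'| := abs_sub_le _ _ _
      _ ≤ ∑ k ∈ insert i s, c k := by rw [Finset.sum_insert hi]; exact add_le_add hxy hyx'

theorem abs_sub_le_sum [Fintype ι] (hf : BoundedDifferences f c) (x x' : ∀ i, 𝒳 i) :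
    |f x - f x'| ≤ ∑ i, c i := by
  classical
  exact hf.abs_sub_le_sum_of_forall_notMem Finset.univ fun j hj => absurd (Finset.mem_univ j) hj

theorem integral {α : Type*} [MeasurableSpace α] {μ : Measure α}
    [IsProbabilityMeasure μ] {g : α → (∀ i, 𝒳 i) → ℝ} (hint : ∀ y, Integrable (fun x => g x y) μ)
    (hg : ∀ x, BoundedDifferences (g x) c) :
    BoundedDifferences (fun y => ∫ x, g x y ∂μ) c := fun y y' i hyy' => by
  rw [← integral_sub (hint y) (hint y')]
  simpa using norm_integral_le_of_norm_le_const (μ := μ) (f := fun x => g x y - g x y')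
    (ae_of_all μ fun x => hg x y y' i hyy')

theorem comp_insertNth {n : ℕ} {𝒳 : Fin (n + 1) → Type*} {f : (∀ i, 𝒳 i) → ℝ}
    {c : Fin (n + 1) → ℝ} (hf : BoundedDifferences f c) (i : Fin (n + 1)) (x : 𝒳 i) :
    BoundedDifferences (fun y => f (Fin.insertNth i x y)) (fun j => c (i.succAbove j)) :=
  fun y y' j hyy' => hf _ _ _ fun k hk => by
    rcases Fin.eq_self_or_eq_succAbove i k with rfl | ⟨l, rfl⟩
    · simp
    · simpa using hyy' l (fun h => hk (h ▸ rfl))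

theorem abs_sub_insertNth_le {n : ℕ} {𝒳 : Fin (n + 1) → Type*} {f : (∀ i, 𝒳 i) → ℝ}
    {c : Fin (n + 1) → ℝ} (hf : BoundedDifferences f c) (i : Fin (n + 1)) (x x' : 𝒳 i)
    (y : ∀ j, 𝒳 (i.succAbove j)) :
    |f (Fin.insertNth i x y) - f (Fin.insertNth i x' y)| ≤ c i :=
  hf _ _ i fun k hk => by
    obtain ⟨l, rfl⟩ := Fin.exists_succAbove_eq hk
    simp

end BoundedDifferences

theorem exists_forall_mem_Icc_of_abs_sub_le {α : Type*} [Nonempty α] {F : α → ℝ} {c : ℝ}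
    (h : ∀ x x', |F x - F x'| ≤ c) : ∃ a, ∀ x, F x ∈ Set.Icc a (a + c) := by
  obtain ⟨x₀⟩ := ‹Nonempty α›
  have hbdd : BddBelow (Set.range F) :=
    ⟨F x₀ - c, by rintro _ ⟨x, rfl⟩; linarith [(abs_le.1 (h x₀ x)).2]⟩
  refine ⟨⨅ x, F x, fun x => ⟨ciInf_le hbdd x, ?_⟩⟩
  have : F x - c ≤ ⨅ x, F x := le_ciInf fun x' => by linarith [(abs_le.1 (h x x')).2]
  linarith

namespace ProbabilityTheory

/-- Hoeffding's lemma on the interval `[⨅ F, ⨅ F + c]`: an interval around an arbitrary value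
of `F` would have length `2 c` and lose a factor `4` in the parameter. -/
theorem hasSubgaussianMGF_sub_integral_of_abs_sub_le {α : Type*} [MeasurableSpace α]
    {μ : Measure α} [IsProbabilityMeasure μ] {F : α → ℝ} (hF : Measurable F) {c : ℝ}
    (h : ∀ x x', |F x - F x'| ≤ c) :
    HasSubgaussianMGF (fun x => F x - ∫ y, F y ∂μ) ((‖c‖₊ / 2) ^ 2) μ := by
  have := nonempty_of_isProbabilityMeasure μ
  obtain ⟨a, ha⟩ := exists_forall_mem_Icc_of_abs_sub_le h
  simpa using hasSubgaussianMGF_of_mem_Icc hF.aemeasurable (ae_of_all μ ha)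

theorem HasSubgaussianMGF.prod_of_sections {α β : Type*} [MeasurableSpace α]
    [MeasurableSpace β] {μ : Measure α} {ν : Measure β} [SFinite μ] [SFinite ν]
    {H : α × β → ℝ} {G : β → ℝ} {c₁ c₂ : ℝ≥0}
    (hint : ∀ t, Integrable (fun p => exp (t * H p)) (μ.prod ν))
    (hsec : ∀ y, HasSubgaussianMGF (fun x => H (x, y) - G y) c₁ μ)
    (hG : HasSubgaussianMGF G c₂ ν) :
    HasSubgaussianMGF H (c₁ + c₂) (μ.prod ν) where
  integrable_exp_mul := hint
  mgf_le t := by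
    have hsplit : ∀ y, ∫ x, exp (t * H (x, y)) ∂μ
        = exp (t * G y) * mgf (fun x => H (x, y) - G y) μ t := fun y => by
      rw [mgf, ← integral_const_mul]
      congr 1 with x
      rw [← exp_add]
      ring_nf
    calc mgf H (μ.prod ν) t = ∫ y, ∫ x, exp (t * H (x, y)) ∂μ ∂ν :=
          integral_prod_symm _ (hint t)
      _ ≤ ∫ y, exp (t * G y) * exp (c₁ * t ^ 2 / 2) ∂ν := by
        refine integral_mono (hint t).integral_prod_right
          ((hG.integrable_exp_mul t).mul_const _) fun y => ?_
        rw [hsplit]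
        gcongr
        exact (hsec y).mgf_le t
      _ = mgf G ν t * exp (c₁ * t ^ 2 / 2) := integral_mul_const _ _
      _ ≤ exp (c₂ * t ^ 2 / 2) * exp (c₁ * t ^ 2 / 2) := by gcongr; exact hG.mgf_le t
      _ = exp ((c₁ + c₂ : ℝ≥0) * t ^ 2 / 2) := by rw [← exp_add]; push_cast; ring_nf

theorem HasSubgaussianMGF.measureReal_abs_ge_le {Ω : Type*} [MeasurableSpace Ω]
    {μ : Measure Ω} [IsFiniteMeasure μ] {X : Ω → ℝ} {c : ℝ≥0} (h : HasSubgaussianMGF X c μ)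
    {ε : ℝ} (hε : 0 ≤ ε) : μ.real {ω | ε ≤ |X ω|} ≤ 2 * exp (-ε ^ 2 / (2 * c)) := by
  have hsplit : {ω | ε ≤ |X ω|} = {ω | ε ≤ X ω} ∪ {ω | ε ≤ (-X) ω} := by
    ext ω
    simp [le_abs]
  calc μ.real {ω | ε ≤ |X ω|} ≤ μ.real {ω | ε ≤ X ω} + μ.real {ω | ε ≤ (-X) ω} :=
        hsplit ▸ measureReal_union_le _ _
    _ ≤ exp (-ε ^ 2 / (2 * c)) + exp (-ε ^ 2 / (2 * c)) :=
        add_le_add (h.measure_ge_le hε) (h.neg.measure_ge_le hε)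
    _ = 2 * exp (-ε ^ 2 / (2 * c)) := by ring

end ProbabilityTheory

theorem BoundedDifferences.hasSubgaussianMGF_sub_integral_pi {n : ℕ} {𝒳 : Fin n → Type*}
    [∀ i, MeasurableSpace (𝒳 i)] (μ : ∀ i, Measure (𝒳 i)) [∀ i, IsProbabilityMeasure (μ i)]
    {f : (∀ i, 𝒳 i) → ℝ} (hf : Measurable f) {c : Fin n → ℝ} (hbd : BoundedDifferences f c) :
    HasSubgaussianMGF (fun x => f x - ∫ y, f y ∂Measure.pi μ) (∑ i, (‖c i‖₊ / 2) ^ 2)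
      (Measure.pi μ) := by
  induction n with
  | zero =>
    have hconst : ∀ x, f x - ∫ y, f y ∂Measure.pi μ = 0 := fun x => by
      rw [integral_congr_ae (ae_of_all _ fun y => congrArg f (Subsingleton.elim y x))]
      simp
    simp [hconst]
  | succ n ih =>
    let e := MeasurableEquiv.piFinSuccAbove 𝒳 0
    let ν := fun j => μ (Fin.succAbove 0 j)
    have he : MeasurePreserving e (Measure.pi μ) ((μ 0).prod (Measure.pi ν)) :=
      measurePreserving_piFinSuccAbove μ 0
    let g := fun p => f (e.symm p)
    have hg : Measurable g := hf.comp e.symm.measurable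
    let G := fun y => ∫ x, g (x, y) ∂μ 0
    set m := ∫ x, f x ∂Measure.pi μ
    have : Nonempty (∀ i, 𝒳 i) := nonempty_of_isProbabilityMeasure (Measure.pi μ)
    obtain ⟨a, ha⟩ := exists_forall_mem_Icc_of_abs_sub_le hbd.abs_sub_le_sum
    have hg_Icc : ∀ p, g p ∈ Set.Icc a (a + ∑ i, c i) := fun p => ha _
    have hG : BoundedDifferences G fun j => c (Fin.succAbove 0 j) :=
      integral (fun y => .of_mem_Icc _ _ (hg.comp measurable_prodMk_right).aemeasurable
        (ae_of_all _ fun x => hg_Icc (x, y))) fun x => hbd.comp_insertNth 0 x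
    have hm : m = ∫ y, G y ∂Measure.pi ν := by
      rw [← integral_prod_symm g (.of_mem_Icc _ _ hg.aemeasurable (ae_of_all _ hg_Icc)),
        ← he.integral_comp']
      simp only [g, e.symm_apply_apply, m]
    have hsec : ∀ y, HasSubgaussianMGF (fun x => (g (x, y) - m) - (G y - m))
        ((‖c 0‖₊ / 2) ^ 2) (μ 0) := fun y =>
      (hasSubgaussianMGF_sub_integral_of_abs_sub_le (F := fun x => g (x, y))
        (hg.comp measurable_prodMk_right) fun x x' => hbd.abs_sub_insertNth_le 0 x x' y).congr
        (ae_of_all _ fun x => (sub_sub_sub_cancel_right (g (x, y)) (G y) _).symm)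
    have hprod := HasSubgaussianMGF.prod_of_sections
      (fun t => integrable_exp_mul_of_mem_Icc (a := a - m) (b := a + ∑ i, c i - m)
        (hg.sub_const _).aemeasurable
        (ae_of_all _ fun p => Set.sub_mem_Icc_iff_left.2 (by simpa using hg_Icc p))) hsec
      (hm ▸ ih ν (hg.stronglyMeasurable.integral_prod_left'.measurable) hG)
    rw [← he.map_eq] at hprod
    convert hprod.of_map e.measurable.aemeasurable using 1
    · ext x; exact congrArg (f · - _) (e.symm_apply_apply x).symm
    · rw [Fin.sum_univ_succAbove _ 0]

/-- McDiarmid's inequality: for independent random variables `X i` and a function `f`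
satisfying the bounded differences property with constants `c i`, for all `t > 0`,
`P(|f(X) − E[f(X)]| ≥ t) ≤ 2 exp(−2t² / ∑ i, c i ^ 2)`. -/
theorem mcdiarmid {Ω : Type*} [MeasureSpace Ω] [IsProbabilityMeasure (ℙ : Measure Ω)]
    {n : ℕ} {𝒳 : Fin n → Type*} [∀ i, MeasurableSpace (𝒳 i)]
    (X : ∀ i, Ω → 𝒳 i) (hXmeas : ∀ i, Measurable (X i))
    (hindep : iIndepFun X ℙ)
    (f : (∀ i, 𝒳 i) → ℝ) (hf : Measurable f)
    (c : Fin n → ℝ)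
    (hbd : ∀ (x x' : ∀ i, 𝒳 i) (i : Fin n), (∀ j, j ≠ i → x j = x' j) →
      |f x - f x'| ≤ c i)
    (t : ℝ) (ht : 0 < t) :
    (ℙ {ω | t ≤ |f (fun i => X i ω) - ∫ ω', f (fun i => X i ω') ∂ℙ|}).toReal ≤
      2 * Real.exp (-2 * t ^ 2 / ∑ i, c i ^ 2) := by
  have := fun i => Measure.isProbabilityMeasure_map (μ := ℙ) (hXmeas i).aemeasurable
  have hV : Measurable fun ω i => X i ω := measurable_pi_lambda _ hXmeas
  have hlaw : Measure.map (fun ω i => X i ω) ℙ = Measure.pi fun i => Measure.map (X i) ℙ :=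
    hindep.map_fun_eq_pi_map fun i => (hXmeas i).aemeasurable
  have hsub :=
    BoundedDifferences.hasSubgaussianMGF_sub_integral_pi (fun i => Measure.map (X i) ℙ) hf hbd
  rw [← hlaw, integral_map hV.aemeasurable hf.aestronglyMeasurable] at hsub
  have hS : ((∑ i, (‖c i‖₊ / 2) ^ 2 : ℝ≥0) : ℝ) = (∑ i, c i ^ 2) / 4 := by
    push_cast
    simp only [Real.norm_eq_abs, div_pow, sq_abs, Finset.sum_div]
    norm_num
  convert (hsub.of_map hV.aemeasurable).measureReal_abs_ge_le ht.le using 3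
  · rfl
  · rw [hS]
    ring
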